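/- arXiv:1212.5287 — 3 statements merged into one kernel-verified Lean document; each statement's English description precedes it below -/
import Mathlib

section
/- Let u : ℝ² × (0,∞) → ℝ be twice continuously differentiable in space and once in time, and suppose u solves the driftless Fokker–Planck equation ∂u/∂t = (σ₁²/2)∂²u/∂x₁² + (σ₂²/2)∂²u/∂x₂² + σ₁σ₂ρ ∂²u/∂x₁∂x₂. Define constants K₁ = (σ₂μ₁ − σ₁μ₂ρ)/(σ₁²σ₂(1−ρ²)), K₂ = (σ₁μ₂ − σ₂μ₁ρ)/(σ₁σ₂²(1−ρ²)), K₃ = σ₁σ₂√(1−ρ²), c = (σ₁²μ₂² − 2μ₁μ₂σ₁σ₂ρ + σ₂²μ₁²)/(2K₃²), and set v(x₁,x₂,t) = exp(K₁(x₁ − x₀₁) + K₂(x₂ − x₀₂) − c·t) · u(x₁,x₂,t). Then v solves the Fokker–Planck equation with drift: ∂v/∂t = (σ₁²/2)∂²v/∂x₁² + (σ₂²/2)∂²v/∂x₂² + σ₁σ₂ρ ∂²v/∂x₁∂x₂ − μ₁ ∂v/∂x₁ − μ₂ ∂v/∂x₂. -/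
/-!
Write `Σ = [[σ₁², σ₁σ₂ρ], [σ₁σ₂ρ, σ₂²]]` for the covariance matrix, so `det Σ = K₃²`,
`K = Σ⁻¹ μ` and `c = ½ μᵀ Σ⁻¹ μ = ½ μ · K`. For `v = e^φ u` with `φ` affine, every partial
derivative `∂` acts on `v` as `e^φ (∂ + ∂φ)` acts on `u`, so
`∂ₜv - L_μ v = e^φ ((∂ₜu - L₀u) + (μ - ΣK) · ∇ₓu + (μ · K - ½ Kᵀ Σ K - c) u)`,
and both coefficients vanish.
-/

open Real

section ExpWeight

variable {g f : ℝ → ℝ} {k : ℝ}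

lemma hasDerivAt_exp_mul {f' z : ℝ} (hg : HasDerivAt g k z) (hf : HasDerivAt f f' z) :
    HasDerivAt (fun s => exp (g s) * f s) (exp (g z) * (k * f z + f')) z :=
  (hg.exp.mul hf).congr_deriv (by ring)

lemma deriv_exp_mul (hg : ∀ z, HasDerivAt g k z) (hf : Differentiable ℝ f) :
    deriv (fun s => exp (g s) * f s) = fun z => exp (g z) * (k * f z + deriv f z) :=
  funext fun z => (hasDerivAt_exp_mul (hg z) (hf z).hasDerivAt).deriv

lemma deriv_deriv_exp_mul (hg : ∀ z, HasDerivAt g k z) (hf : Differentiable ℝ f) {z : ℝ}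
    (hf' : DifferentiableAt ℝ (deriv f) z) :
    deriv (deriv fun s => exp (g s) * f s) z =
      exp (g z) * (k ^ 2 * f z + 2 * k * deriv f z + deriv (deriv f) z) := by
  rw [deriv_exp_mul hg hf, (hasDerivAt_exp_mul (hg z)
    (((hf z).hasDerivAt.const_mul k).fun_add hf'.hasDerivAt)).deriv]
  ring

lemma deriv_deriv_exp_mul_mixed {φ w : ℝ → ℝ → ℝ} {k₁ k₂ a b : ℝ}
    (hφ₁ : HasDerivAt (fun y => φ y b) k₁ a) (hφ₂ : ∀ y z, HasDerivAt (φ y) k₂ z)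
    (hw₂ : ∀ y, Differentiable ℝ (w y)) (hw₁ : DifferentiableAt ℝ (fun y => w y b) a)
    (hw₁₂ : DifferentiableAt ℝ (fun y => deriv (w y) b) a) :
    deriv (fun y => deriv (fun z => exp (φ y z) * w y z) b) a =
      exp (φ a b) * (k₁ * k₂ * w a b + k₂ * deriv (fun y => w y b) a +
        k₁ * deriv (w a) b + deriv (fun y => deriv (w y) b) a) := by
  have inner : (fun y => deriv (fun z => exp (φ y z) * w y z) b) =
      fun y => exp (φ y b) * (k₂ * w y b + deriv (w y) b) :=
    funext fun y => by rw [deriv_exp_mul (hφ₂ y) (hw₂ y)]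
  rw [inner, (hasDerivAt_exp_mul hφ₁
    ((hw₁.hasDerivAt.const_mul k₂).fun_add hw₁₂.hasDerivAt)).deriv]
  ring

end ExpWeight

lemma ContDiff.differentiable_deriv_comp {E : Type*} [NormedAddCommGroup E] [NormedSpace ℝ E]
    {F : E → ℝ} (hF : ContDiff ℝ 2 F) {ℓ : ℝ → ℝ → E} {v : E} (hℓ : ∀ y s, HasDerivAt (ℓ y) v s)
    {τ : ℝ → ℝ} (hτ : Differentiable ℝ fun y => ℓ y (τ y)) :
    Differentiable ℝ fun y => deriv (fun s => F (ℓ y s)) (τ y) := by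
  have h : (fun y => deriv (fun s => F (ℓ y s)) (τ y)) = fun y => fderiv ℝ F (ℓ y (τ y)) v :=
    funext fun y => ((hF.differentiable two_ne_zero _).hasFDerivAt.comp_hasDerivAt _ (hℓ y _)).deriv
  rw [h]
  exact (((hF.fderiv_right (m := 1) le_rfl).differentiable one_ne_zero).comp hτ).clm_apply
    (differentiable_const v)

section Slices

variable {u : ℝ → ℝ → ℝ → ℝ}

lemma differentiable_deriv_slice_fst (hu : ContDiff ℝ 2 fun p : ℝ × ℝ × ℝ => u p.1 p.2.1 p.2.2)
    (b c : ℝ) : Differentiable ℝ (deriv fun s => u s b c) :=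
  hu.differentiable_deriv_comp (ℓ := fun _ s => (s, b, c)) (τ := id)
    (fun _ s => (hasDerivAt_id s).prodMk (hasDerivAt_const s (b, c))) (by fun_prop)

lemma differentiable_deriv_slice_snd (hu : ContDiff ℝ 2 fun p : ℝ × ℝ × ℝ => u p.1 p.2.1 p.2.2)
    (a c : ℝ) : Differentiable ℝ (deriv fun s => u a s c) :=
  hu.differentiable_deriv_comp (ℓ := fun _ s => (a, s, c)) (τ := id)
    (fun _ s => (hasDerivAt_const s a).prodMk ((hasDerivAt_id s).prodMk (hasDerivAt_const s c)))
    (by fun_prop)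

lemma differentiable_deriv_slice_snd_left
    (hu : ContDiff ℝ 2 fun p : ℝ × ℝ × ℝ => u p.1 p.2.1 p.2.2) (b c : ℝ) :
    Differentiable ℝ fun y => deriv (fun s => u y s c) b :=
  hu.differentiable_deriv_comp (ℓ := fun y s => (y, s, c)) (τ := fun _ => b)
    (fun y s => (hasDerivAt_const s y).prodMk ((hasDerivAt_id s).prodMk (hasDerivAt_const s c)))
    (by fun_prop)

end Slices

section DriftCoefficients

variable {σ₁ σ₂ ρ μ₁ μ₂ K₁ K₂ : ℝ}

lemma covariance_mul_drift_coeff (hσ₁ : σ₁ ≠ 0) (hσ₂ : σ₂ ≠ 0) (hρ : 1 - ρ ^ 2 ≠ 0)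
    (hK₁ : K₁ = (σ₂ * μ₁ - σ₁ * μ₂ * ρ) / (σ₁ ^ 2 * σ₂ * (1 - ρ ^ 2)))
    (hK₂ : K₂ = (σ₁ * μ₂ - σ₂ * μ₁ * ρ) / (σ₁ * σ₂ ^ 2 * (1 - ρ ^ 2))) :
    σ₁ ^ 2 * K₁ + σ₁ * σ₂ * ρ * K₂ = μ₁ ∧ σ₁ * σ₂ * ρ * K₁ + σ₂ ^ 2 * K₂ = μ₂ := by
  subst hK₁ hK₂
  constructor <;> field_simp <;> ring

lemma two_mul_decay_rate (hσ₁ : σ₁ ≠ 0) (hσ₂ : σ₂ ≠ 0) (hρ : 0 < 1 - ρ ^ 2)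
    (hK₁ : K₁ = (σ₂ * μ₁ - σ₁ * μ₂ * ρ) / (σ₁ ^ 2 * σ₂ * (1 - ρ ^ 2)))
    (hK₂ : K₂ = (σ₁ * μ₂ - σ₂ * μ₁ * ρ) / (σ₁ * σ₂ ^ 2 * (1 - ρ ^ 2))) :
    2 * ((σ₁ ^ 2 * μ₂ ^ 2 - 2 * μ₁ * μ₂ * σ₁ * σ₂ * ρ + σ₂ ^ 2 * μ₁ ^ 2) /
      (2 * (σ₁ * σ₂ * √(1 - ρ ^ 2)) ^ 2)) = μ₁ * K₁ + μ₂ * K₂ := by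
  subst hK₁ hK₂
  rw [mul_pow, mul_pow, sq_sqrt hρ.le]
  field_simp
  ring

end DriftCoefficients

theorem stmt_12 (σ₁ σ₂ ρ μ₁ μ₂ x₀₁ x₀₂ : ℝ) (hσ₁ : 0 < σ₁) (hσ₂ : 0 < σ₂)
    (hρ : -1 < ρ ∧ ρ < 1)
    (u : ℝ → ℝ → ℝ → ℝ)
    (hu_smooth : ContDiff ℝ 2 (fun p : ℝ × ℝ × ℝ => u p.1 p.2.1 p.2.2))
    (hu : ∀ x₁ x₂ t : ℝ, 0 < t →
      deriv (fun τ => u x₁ x₂ τ) t =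
        σ₁ ^ 2 / 2 * deriv (deriv (fun z => u z x₂ t)) x₁ +
        σ₂ ^ 2 / 2 * deriv (deriv (fun z => u x₁ z t)) x₂ +
        σ₁ * σ₂ * ρ * deriv (fun y => deriv (fun z => u y z t) x₂) x₁) :
    let K₁ : ℝ := (σ₂ * μ₁ - σ₁ * μ₂ * ρ) / (σ₁ ^ 2 * σ₂ * (1 - ρ ^ 2))
    let K₂ : ℝ := (σ₁ * μ₂ - σ₂ * μ₁ * ρ) / (σ₁ * σ₂ ^ 2 * (1 - ρ ^ 2))
    let K₃ : ℝ := σ₁ * σ₂ * Real.sqrt (1 - ρ ^ 2)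
    let c : ℝ := (σ₁ ^ 2 * μ₂ ^ 2 - 2 * μ₁ * μ₂ * σ₁ * σ₂ * ρ + σ₂ ^ 2 * μ₁ ^ 2) / (2 * K₃ ^ 2)
    let v : ℝ → ℝ → ℝ → ℝ := fun x₁ x₂ t =>
      Real.exp (K₁ * (x₁ - x₀₁) + K₂ * (x₂ - x₀₂) - c * t) * u x₁ x₂ t
    ∀ x₁ x₂ t : ℝ, 0 < t →
      deriv (fun τ => v x₁ x₂ τ) t =
        σ₁ ^ 2 / 2 * deriv (deriv (fun z => v z x₂ t)) x₁ +
        σ₂ ^ 2 / 2 * deriv (deriv (fun z => v x₁ z t)) x₂ +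
        σ₁ * σ₂ * ρ * deriv (fun y => deriv (fun z => v y z t) x₂) x₁ -
        μ₁ * deriv (fun z => v z x₂ t) x₁ -
        μ₂ * deriv (fun z => v x₁ z t) x₂ := by
  intro K₁ K₂ K₃ c v x₁ x₂ t ht
  have hρ' : 0 < 1 - ρ ^ 2 := by nlinarith [hρ.1, hρ.2]
  obtain ⟨hμ₁, hμ₂⟩ := covariance_mul_drift_coeff (K₁ := K₁) (K₂ := K₂) hσ₁.ne' hσ₂.ne'
    hρ'.ne' rfl rfl
  have hc : 2 * c = μ₁ * K₁ + μ₂ * K₂ := two_mul_decay_rate hσ₁.ne' hσ₂.ne' hρ' rfl rfl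
  have hφ₁ : ∀ y, HasDerivAt (fun y => K₁ * (y - x₀₁) + K₂ * (x₂ - x₀₂) - c * t) K₁ y := fun y => by
    simpa using (((hasDerivAt_id' y).sub_const x₀₁).const_mul K₁).add_const (K₂ * (x₂ - x₀₂))
      |>.sub_const (c * t)
  have hφ₂ : ∀ y z, HasDerivAt (fun z => K₁ * (y - x₀₁) + K₂ * (z - x₀₂) - c * t) K₂ z :=
    fun y z => by
      simpa using (((hasDerivAt_id' z).sub_const x₀₂).const_mul K₂).const_add (K₁ * (y - x₀₁))
        |>.sub_const (c * t)
  have hφ₃ : HasDerivAt (fun τ => K₁ * (x₁ - x₀₁) + K₂ * (x₂ - x₀₂) - c * τ) (-c) t := by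
    simpa using ((hasDerivAt_id' t).const_mul c).const_sub (K₁ * (x₁ - x₀₁) + K₂ * (x₂ - x₀₂))
  have hu' := hu_smooth.differentiable two_ne_zero
  have hu₁ : Differentiable ℝ fun s => u s x₂ t := hu'.comp (f := fun s => (s, x₂, t)) (by fun_prop)
  have hu₂ : ∀ y, Differentiable ℝ fun s => u y s t :=
    fun y => hu'.comp (f := fun s => (y, s, t)) (by fun_prop)
  have hu₃ : Differentiable ℝ fun s => u x₁ x₂ s :=
    hu'.comp (f := fun s => (x₁, x₂, s)) (by fun_prop)
  unfold v
  rw [deriv_deriv_exp_mul_mixed (φ := fun y z => K₁ * (y - x₀₁) + K₂ * (z - x₀₂) - c * t)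
      (hφ₁ x₁) hφ₂ hu₂ (hu₁ x₁) (differentiable_deriv_slice_snd_left hu_smooth x₂ t x₁),
    deriv_deriv_exp_mul hφ₁ hu₁ (differentiable_deriv_slice_fst hu_smooth x₂ t x₁),
    deriv_deriv_exp_mul (hφ₂ x₁) (hu₂ x₁) (differentiable_deriv_slice_snd hu_smooth x₁ t x₂),
    deriv_exp_mul hφ₁ hu₁, deriv_exp_mul (hφ₂ x₁) (hu₂ x₁),
    (hasDerivAt_exp_mul hφ₃ (hu₃ t).hasDerivAt).deriv, hu x₁ x₂ t ht]
  linear_combination -exp (K₁ * (x₁ - x₀₁) + K₂ * (x₂ - x₀₂) - c * t) *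
    ((deriv (fun z => u z x₂ t) x₁ + K₁ * u x₁ x₂ t / 2) * hμ₁ +
      (deriv (fun z => u x₁ z t) x₂ + K₂ * u x₁ x₂ t / 2) * hμ₂ + u x₁ x₂ t / 2 * hc)
end

section
/- Let g : (−∞, B] → ℝ be nonnegative, monotone nondecreasing, and integrable on (−∞, B]. Then for every r > 0, the right Riemann sum r·Σ_{u=1}^{∞} g(B − u r) converges, and |∫_{−∞}^{B} g(y) dy − r·Σ_{u=1}^{∞} g(B − u r)| ≤ r·g(B). -/
/-!
Cut `(-∞, B]` into the cells `(B - (n+1) r, B - n r]`. By monotonicity the integral over the `n`-th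
cell lies between `r g(B - (n+1) r)` and `r g(B - n r)`, so summing over all cells puts the
integral between the right Riemann sum and the same sum with the extra term `r g(B)`.
-/

open Set MeasureTheory

theorem Antitone.iUnion_Ioc_succ_eq_Iic {α : Type*} [LinearOrder α] {f : ℕ → α}
    (hf : Antitone f) (h2f : ¬BddBelow (range f)) :
    ⋃ n, Ioc (f (n + 1)) (f n) = Iic (f 0) := by
  have hdual := iUnion_Ico_map_succ_eq_Ici (β := αᵒᵈ) (f := f) (fun n => hf (Nat.zero_le n)) h2f
  ext x
  simp only [mem_iUnion, mem_Ioc, mem_Iic, exists_congr fun _ => and_comm (a := f _ < x)]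
  exact mem_iUnion.symm.trans (Set.ext_iff.1 hdual (OrderDual.toDual x))

theorem antitone_sub_nat_mul (B : ℝ) {r : ℝ} (hr : 0 ≤ r) : Antitone fun n : ℕ => B - n * r :=
  fun _ _ hmn => sub_le_sub_left (mul_le_mul_of_nonneg_right (Nat.cast_le.2 hmn) hr) B

theorem not_bddBelow_range_sub_nat_mul (B : ℝ) {r : ℝ} (hr : 0 < r) :
    ¬BddBelow (range fun n : ℕ => B - n * r) := by
  rintro ⟨c, hc⟩
  obtain ⟨n, hn⟩ := exists_nat_gt ((B - c) / r)
  have hcn : c ≤ B - n * r := hc ⟨n, rfl⟩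
  rw [div_lt_iff₀ hr] at hn
  linarith

theorem MonotoneOn.mul_le_setIntegral_Ioc {g : ℝ → ℝ} {a b : ℝ} (hab : a ≤ b)
    (hg : MonotoneOn g (Icc a b)) : (b - a) * g a ≤ ∫ x in Ioc a b, g x := by
  have hint : IntegrableOn g (Ioc a b) :=
    (hg.integrableOn_isCompact isCompact_Icc).mono_set Ioc_subset_Icc_self
  calc (b - a) * g a = ∫ _ in Ioc a b, g a := by simp [hab]
    _ ≤ ∫ x in Ioc a b, g x :=
      setIntegral_mono_on (by simp) hint measurableSet_Ioc fun x hx =>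
        hg (left_mem_Icc.2 hab) (Ioc_subset_Icc_self hx) hx.1.le

theorem MonotoneOn.setIntegral_Ioc_le_mul {g : ℝ → ℝ} {a b : ℝ} (hab : a ≤ b)
    (hg : MonotoneOn g (Icc a b)) : ∫ x in Ioc a b, g x ≤ (b - a) * g b := by
  have hint : IntegrableOn g (Ioc a b) :=
    (hg.integrableOn_isCompact isCompact_Icc).mono_set Ioc_subset_Icc_self
  calc ∫ x in Ioc a b, g x ≤ ∫ _ in Ioc a b, g b :=
      setIntegral_mono_on hint (by simp) measurableSet_Ioc fun x hx =>
        hg (Ioc_subset_Icc_self hx) (right_mem_Icc.2 hab) hx.2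
    _ = (b - a) * g b := by simp [hab]

theorem summable_succ_and_abs_sub_tsum_succ_le_of_hasSum {a c : ℕ → ℝ} {I : ℝ}
    (ha : HasSum a I) (hc : ∀ n, 0 ≤ c n) (hca : ∀ n, c (n + 1) ≤ a n) (hac : ∀ n, a n ≤ c n) :
    Summable (fun n => c (n + 1)) ∧ |I - ∑' n, c (n + 1)| ≤ c 0 := by
  have hsucc : Summable fun n => c (n + 1) :=
    Summable.of_nonneg_of_le (fun n => hc (n + 1)) hca ha.summable
  have hsum : Summable c := (summable_nat_add_iff 1).1 hsucc
  have hlower : ∑' n, c (n + 1) ≤ I := hasSum_le hca hsucc.hasSum ha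
  have hupper : I ≤ c 0 + ∑' n, c (n + 1) :=
    hsum.tsum_eq_zero_add ▸ hasSum_le hac ha hsum.hasSum
  exact ⟨hsucc, abs_le.2 ⟨by linarith, by linarith⟩⟩

theorem stmt_13 (B : ℝ) (g : ℝ → ℝ)
    (hg_nonneg : ∀ x ≤ B, 0 ≤ g x)
    (hg_mono : MonotoneOn g (Set.Iic B))
    (hg_int : IntegrableOn g (Set.Iic B)) :
    ∀ r : ℝ, 0 < r →
      Summable (fun u : ℕ => g (B - (u + 1) * r)) ∧
      |(∫ y in Set.Iic B, g y) - r * ∑' u : ℕ, g (B - (u + 1) * r)| ≤ r * g B := by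
  intro r hr
  set f : ℕ → ℝ := fun n => B - n * r
  have hf : Antitone f := antitone_sub_nat_mul B hr.le
  have hf_le : ∀ n, f n ≤ B := fun n => by simpa [f] using hf (Nat.zero_le n)
  have hlen : ∀ n, f n - f (n + 1) = r := fun n => by push_cast [f]; ring
  have hmono : ∀ n, MonotoneOn g (Icc (f (n + 1)) (f n)) := fun n =>
    hg_mono.mono (Icc_subset_Iic_self.trans (Iic_subset_Iic.2 (hf_le n)))
  have hunion : ⋃ n, Ioc (f (n + 1)) (f n) = Iic B := by
    simpa [f] using hf.iUnion_Ioc_succ_eq_Iic (not_bddBelow_range_sub_nat_mul B hr)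
  have hsum : HasSum (fun n => ∫ x in Ioc (f (n + 1)) (f n), g x) (∫ x in Iic B, g x) := by
    rw [← hunion] at hg_int ⊢
    exact hasSum_integral_iUnion (fun _ => measurableSet_Ioc) hf.pairwise_disjoint_on_Ioc_succ
      hg_int
  have key := summable_succ_and_abs_sub_tsum_succ_le_of_hasSum hsum (c := fun n => r * g (f n))
    (fun n => mul_nonneg hr.le (hg_nonneg _ (hf_le n)))
    (fun n => hlen n ▸ (hmono n).mul_le_setIntegral_Ioc (hf (Nat.le_succ n)))
    (fun n => hlen n ▸ (hmono n).setIntegral_Ioc_le_mul (hf (Nat.le_succ n)))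
  simpa [f, tsum_mul_left, summable_mul_left_iff hr.ne'] using key
end

section
/- Let α > 0, n ∈ ℕ₊, and define φ(x₁) ∈ (0, α) for x₁ < B₁ (with fixed x₂ < B₂) by r̄ cos φ = σ₂(B₁−x₁) − σ₁ρ(B₂−x₂), r̄ sin φ = σ₁√(1−ρ²)(B₂−x₂), where r̄ = √(σ₁²(B₂−x₂)² + σ₂²(B₁−x₁)² − 2σ₁σ₂ρ(B₁−x₁)(B₂−x₂)). Let also g(x₁) = 1 − exp(2(B₁−x₀₁)(x₁−B₁)/(σ₁²t)) for fixed B₁ > x₀₁, σ₁ > 0, t > 0. Then lim_{x₁→B₁⁻} sin(nπφ(x₁)/α) / g(x₁) = (−1)^{n+1} · n · σ₁σ₂π√(1−ρ²)·t / (2α(B₂−x₂)(B₁−x₀₁)). -/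
/-!
At `x₁ = B₁` the point whose argument is `φ` equals `σ₁ (B₂ - x₂) e^{iα}` (using `cos α = -ρ`,
`sin α = √(1 - ρ²)`), so `φ B₁ = α` and both numerator and denominator vanish there. Both are
differentiable at `B₁`, so the limit is the ratio of their derivatives. Since `arg = Im ∘ log`,
the derivative of `φ` at `B₁` is `Im (-σ₂ / z)` for that point `z`, namely
`σ₂ sin α / (σ₁ (B₂ - x₂))`.
-/

open Filter Topology

theorem HasDerivAt.tendsto_div_of_eq_zero {𝕜 : Type*} [NontriviallyNormedField 𝕜]
    {f g : 𝕜 → 𝕜} {f' g' a : 𝕜} (hf : HasDerivAt f f' a) (hg : HasDerivAt g g' a)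
    (hf0 : f a = 0) (hg0 : g a = 0) (hg' : g' ≠ 0) :
    Tendsto (fun x => f x / g x) (𝓝[≠] a) (𝓝 (f' / g')) := by
  refine ((hasDerivAt_iff_tendsto_slope.mp hf).div
    (hasDerivAt_iff_tendsto_slope.mp hg) hg').congr' ?_
  filter_upwards [self_mem_nhdsWithin] with x (hx : x ≠ a)
  rw [Pi.div_apply, slope_def_field, slope_def_field, hf0, hg0, sub_zero, sub_zero,
    div_div_div_cancel_right₀ (sub_ne_zero.2 hx)]

section Arg

open Complex Set

theorem HasDerivAt.arg {f : ℝ → ℂ} {f' : ℂ} {x : ℝ} (hf : HasDerivAt f f' x)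
    (hx : f x ∈ slitPlane) : HasDerivAt (fun y => arg (f y)) (f' / f x).im x := by
  simpa only [Function.comp_def, imCLM_apply, log_im] using
    imCLM.hasFDerivAt.comp_hasDerivAt x (hf.clog_real hx)

theorem Complex.arg_ofReal_mul_cos_add_ofReal_mul_sin_mul_I {r θ : ℝ} (hr : 0 < r)
    (hθ : θ ∈ Ioc (-Real.pi) Real.pi) :
    arg (((r * Real.cos θ : ℝ) : ℂ) + ((r * Real.sin θ : ℝ) : ℂ) * I) = θ := by
  convert arg_mul_cos_add_sin_mul_I hr hθ using 2
  push_cast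
  ring

theorem HasDerivAt.arg_add_mul_I {u : ℝ → ℝ} {u' a r θ : ℝ} (hu : HasDerivAt u u' a)
    (hr : 0 < r) (hθ : θ ∈ Ioo 0 Real.pi) (hua : u a = r * Real.cos θ) :
    HasDerivAt (fun x => Complex.arg ((u x : ℂ) + ((r * Real.sin θ : ℝ) : ℂ) * I))
      (-u' * Real.sin θ / r) a := by
  have hsin : 0 < r * Real.sin θ := mul_pos hr (Real.sin_pos_of_pos_of_lt_pi hθ.1 hθ.2)
  have hslit : (u a : ℂ) + ((r * Real.sin θ : ℝ) : ℂ) * I ∈ slitPlane :=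
    mem_slitPlane_iff.2 <| Or.inr <| by
      rw [add_im, ofReal_im, mul_I_im, ofReal_re, zero_add]; exact hsin.ne'
  convert (hu.ofReal_comp.add_const _).arg hslit using 1
  have hnorm : (r * Real.cos θ) ^ 2 + (r * Real.sin θ) ^ 2 = r ^ 2 := by
    rw [mul_pow, mul_pow, ← mul_add, Real.cos_sq_add_sin_sq, mul_one]
  rw [div_im, normSq_add_mul_I, hua]
  simp only [ofReal_im, ofReal_re, add_re, add_im, mul_I_re, mul_I_im, zero_mul, zero_add, hnorm]
  field_simp
  ring

end Arg

theorem hasDerivAt_sin_nat_mul_pi_div (n : ℕ) {α : ℝ} (hα : α ≠ 0) :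
    HasDerivAt (fun y => Real.sin (n * Real.pi * y / α)) ((-1) ^ n * (n * Real.pi / α)) α := by
  have := (((hasDerivAt_id α).const_mul (n * Real.pi)).div_const α).sin
  simpa [mul_div_assoc, div_self hα, Real.cos_nat_mul_pi] using this

theorem hasDerivAt_one_sub_exp_mul_sub_div (c d a : ℝ) :
    HasDerivAt (fun x => 1 - Real.exp (c * (x - a) / d)) (-(c / d)) a := by
  simpa using ((((hasDerivAt_id a).sub_const a).const_mul c).div_const d).exp.const_sub 1

theorem stmt_16_general (σ₁ σ₂ ρ α B₁ B₂ x₀₁ x₂ t : ℝ) (n : ℕ)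
    (hσ₁ : 0 < σ₁)
    (hα : 0 < α ∧ α < Real.pi) (hcos : Real.cos α = -ρ)
    (hsin : Real.sin α = Real.sqrt (1 - ρ ^ 2))
    (hx₂ : x₂ < B₂) (hB₁ : x₀₁ < B₁) (ht : 0 < t) :
    let φ : ℝ → ℝ := fun x₁ =>
      Complex.arg ((σ₂ * (B₁ - x₁) - σ₁ * ρ * (B₂ - x₂) : ℝ) +
        (σ₁ * Real.sqrt (1 - ρ ^ 2) * (B₂ - x₂) : ℝ) * Complex.I)
    let g : ℝ → ℝ := fun x₁ =>
      1 - Real.exp (2 * (B₁ - x₀₁) * (x₁ - B₁) / (σ₁ ^ 2 * t))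
    Tendsto (fun x₁ => Real.sin (n * Real.pi * φ x₁ / α) / g x₁) (𝓝[<] B₁)
      (𝓝 ((-1 : ℝ) ^ (n + 1) * n * σ₁ * σ₂ * Real.pi * Real.sqrt (1 - ρ ^ 2) * t /
        (2 * α * (B₂ - x₂) * (B₁ - x₀₁)))) := by
  intro φ g
  have hr : 0 < σ₁ * (B₂ - x₂) := mul_pos hσ₁ (sub_pos.2 hx₂)
  have hφ : φ = fun x => Complex.arg ((σ₂ * (B₁ - x) - σ₁ * ρ * (B₂ - x₂) : ℝ) +
      (σ₁ * (B₂ - x₂) * Real.sin α : ℝ) * Complex.I) := by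
    simp only [φ, hsin, mul_right_comm]
  have hu0 : σ₂ * (B₁ - B₁) - σ₁ * ρ * (B₂ - x₂) = σ₁ * (B₂ - x₂) * Real.cos α := by
    rw [hcos]; ring
  have hφα : φ B₁ = α := by
    simp only [hφ, hu0]
    exact Complex.arg_ofReal_mul_cos_add_ofReal_mul_sin_mul_I hr ⟨by linarith, hα.2.le⟩
  have hφ' : HasDerivAt φ (σ₂ * Real.sin α / (σ₁ * (B₂ - x₂))) B₁ := by
    have hu : HasDerivAt (fun x => σ₂ * (B₁ - x) - σ₁ * ρ * (B₂ - x₂)) (-σ₂) B₁ := by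
      simpa using (((hasDerivAt_id B₁).const_sub B₁).const_mul σ₂).sub_const (σ₁ * ρ * (B₂ - x₂))
    rw [hφ]
    convert hu.arg_add_mul_I hr hα hu0 using 1
    ring
  have hnum : HasDerivAt (fun x => Real.sin (n * Real.pi * φ x / α))
      ((-1) ^ n * (n * Real.pi / α) * (σ₂ * Real.sin α / (σ₁ * (B₂ - x₂)))) B₁ :=
    (hasDerivAt_sin_nat_mul_pi_div n hα.1.ne').comp_of_eq B₁ hφ' hφα.symm
  have hnum0 : Real.sin (n * Real.pi * φ B₁ / α) = 0 := by
    rw [hφα, mul_div_cancel_right₀ _ hα.1.ne', Real.sin_nat_mul_pi]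
  have hg' : -(2 * (B₁ - x₀₁) / (σ₁ ^ 2 * t)) ≠ 0 :=
    neg_ne_zero.2 (div_pos (by linarith) (by positivity)).ne'
  have hlim := hnum.tendsto_div_of_eq_zero
    (hasDerivAt_one_sub_exp_mul_sub_div (2 * (B₁ - x₀₁)) (σ₁ ^ 2 * t) B₁) hnum0 (by simp) hg'
  convert hlim.mono_left (nhdsLT_le_nhdsNE B₁) using 2
  rw [← hsin]
  field_simp
  ring

theorem stmt_16 (σ₁ σ₂ ρ α B₁ B₂ x₀₁ x₂ t : ℝ) (n : ℕ) (hn : 1 ≤ n)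
    (hσ₁ : 0 < σ₁) (hσ₂ : 0 < σ₂) (hρ : -1 < ρ ∧ ρ < 1)
    (hα : 0 < α ∧ α < Real.pi) (hcos : Real.cos α = -ρ)
    (hsin : Real.sin α = Real.sqrt (1 - ρ ^ 2))
    (hx₂ : x₂ < B₂) (hB₁ : x₀₁ < B₁) (ht : 0 < t) :
    let φ : ℝ → ℝ := fun x₁ =>
      Complex.arg ((σ₂ * (B₁ - x₁) - σ₁ * ρ * (B₂ - x₂) : ℝ) +
        (σ₁ * Real.sqrt (1 - ρ ^ 2) * (B₂ - x₂) : ℝ) * Complex.I)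
    let g : ℝ → ℝ := fun x₁ =>
      1 - Real.exp (2 * (B₁ - x₀₁) * (x₁ - B₁) / (σ₁ ^ 2 * t))
    Tendsto (fun x₁ => Real.sin (n * Real.pi * φ x₁ / α) / g x₁) (𝓝[<] B₁)
      (𝓝 ((-1 : ℝ) ^ (n + 1) * n * σ₁ * σ₂ * Real.pi * Real.sqrt (1 - ρ ^ 2) * t /
        (2 * α * (B₂ - x₂) * (B₁ - x₀₁)))) :=
  stmt_16_general σ₁ σ₂ ρ α B₁ B₂ x₀₁ x₂ t n hσ₁ hα hcos hsin hx₂ hB₁ ht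
end
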